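/- Let G = ⟨n₁, n₂, n₃, n₄⟩ be a numerical semigroup with n₁ < n₂ < n₃ < n₄ whose defining relations are the complete-intersection relations α₁n₁ = α₂n₂, α₃n₃ = α₄n₄, and β₁n₁ + β₂n₂ = β₃n₃ (with β₄ = 0, β₁ ≥ 1, β₃ ≥ α₃, 0 ≤ β₂ < α₂). Then the Frobenius number satisfies f + n₁ = (α₂ − 1)n₂ + (β₃ − 1)n₃ + (α₄ − 1)n₄, and this representation achieves ord_G(f + n₁) = (α₂ − 1) + (β₃ − 1) + (α₄ − 1). -/

import Mathlib

open MvPolynomial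

/-! The kernel hypothesis says that the lattice of relations among `n1, …, n4` is spanned by
`(α1, -α2, 0, 0)`, `(0, 0, α3, -α4)` and `(β1, β2, -β3, 0)`: send `X^u` to the class of `u` in
`ℤ⁴` modulo that lattice. Put `N = (α2 - 1) n2 + (β3 - 1) n3 + (α4 - 1) n4`.

The three relations reduce every factorization to one with `b < α2`, `c < β3`, `d < α4`, whose
`n2, n3, n4`-part is at most `N`. So if `m + n1 > N`, reducing a factorization of `m + k n1`
(`k` large) leaves an `n1`-coefficient of at least `k`, and `m` lies in the semigroup.

Conversely, comparing a factorization `(a, b, c, d)` of `N` with `(0, α2 - 1, β3 - 1, α4 - 1)`,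
the bounds `b, c, d ≥ 0` force all three lattice coefficients to be `≤ 0`, hence `a = 0` and
`N - n1` is not in the semigroup; so `f + n1 = N`. As each generator of the lattice has positive
coordinate sum (`α2 < α1`, `α4 < α3`, `β3 < β1 + β2` because `n1 < n2 < n3 < n4`), the same
signs show that no factorization of `N` is longer than `(0, α2 - 1, β3 - 1, α4 - 1)`. -/

/-- The numerical semigroup generated by `n1, n2, n3, n4`. -/
def gen4 (n1 n2 n3 n4 : ℕ) : Set ℕ :=
  {z | ∃ a b c d : ℕ, a * n1 + b * n2 + c * n3 + d * n4 = z}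

section BinomialIdeal

variable {σ R : Type*}

noncomputable def intExponent : (σ →₀ ℕ) →+ (σ →₀ ℤ) :=
  Finsupp.mapRange.addMonoidHom (Nat.castAddMonoidHom ℤ)

theorem intExponent_sub_mem_span_of_mem_span [CommRing R] [Nontrivial R] {P : Set ((σ →₀ ℕ) × (σ →₀ ℕ))}
    {a b : σ →₀ ℕ}
    (h : monomial a (1 : R) - monomial b 1 ∈
      Ideal.span ((fun p => monomial p.1 1 - monomial p.2 1) '' P)) :
    intExponent a - intExponent b ∈
      Submodule.span ℤ ((fun p => intExponent p.1 - intExponent p.2) '' P) := by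
  set L := Submodule.span ℤ ((fun p => intExponent (σ := σ) p.1 - intExponent p.2) '' P)
  -- `Θ` kills every generator of the ideal, and separates monomials whose exponents differ mod `L`
  let Θ : MvPolynomial σ R →ₐ[R] AddMonoidAlgebra R ((σ →₀ ℤ) ⧸ L) :=
    AddMonoidAlgebra.mapDomainAlgHom R R (L.mkQ.toAddMonoidHom.comp intExponent)
  have hmon (u : σ →₀ ℕ) :
      Θ (monomial u 1) = AddMonoidAlgebra.single (L.mkQ (intExponent u)) 1 :=
    AddMonoidAlgebra.mapDomain_single
  have hΘ (u v : σ →₀ ℕ) :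
      Θ (monomial u 1 - monomial v 1) = 0 ↔ intExponent u - intExponent v ∈ L := by
    rw [map_sub, sub_eq_zero, hmon, hmon, ← Submodule.Quotient.eq]
    exact AddMonoidAlgebra.single_left_inj (one_ne_zero (α := R))
  rw [← hΘ, ← RingHom.mem_ker]
  refine Ideal.span_le.mpr ?_ h
  rintro _ ⟨p, hp, rfl⟩
  exact (hΘ p.1 p.2).mpr (Submodule.subset_span ⟨p, hp, rfl⟩)

theorem aeval_X_pow_monomial [CommSemiring R] (n : σ → ℕ) (u : σ →₀ ℕ) :
    aeval (fun i => (Polynomial.X : Polynomial R) ^ n i) (monomial u (1 : R)) =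
      Polynomial.X ^ Finsupp.weight n u := by
  simp [aeval_monomial, Finsupp.weight_apply, Finsupp.prod, Finsupp.sum, ← pow_mul',
    Finset.prod_pow_eq_pow_sum]

end BinomialIdeal

def RelationsGeneratedBy (n1 n2 n3 n4 α1 α2 α3 α4 β1 β2 β3 : ℕ) : Prop :=
  ∀ a b c d a' b' c' d' : ℕ,
    a * n1 + b * n2 + c * n3 + d * n4 = a' * n1 + b' * n2 + c' * n3 + d' * n4 →
    ∃ x y z : ℤ, (a : ℤ) - a' = x * α1 + z * β1 ∧ (b : ℤ) - b' = -(x * α2) + z * β2 ∧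
      (c : ℤ) - c' = y * α3 - z * β3 ∧ (d : ℤ) - d' = -(y * α4)

theorem relationsGeneratedBy_of_ker_eq_span {n1 n2 n3 n4 α1 α2 α3 α4 β1 β2 β3 : ℕ}
    (hker : RingHom.ker (MvPolynomial.aeval
          (fun i : Fin 4 => (Polynomial.X : Polynomial ℚ) ^ (![n1, n2, n3, n4] i)) :
        MvPolynomial (Fin 4) ℚ →ₐ[ℚ] Polynomial ℚ) =
      Ideal.span {X 0 ^ α1 - X 1 ^ α2, X 2 ^ α3 - X 3 ^ α4,
        X 0 ^ β1 * X 1 ^ β2 - X 2 ^ β3}) :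
    RelationsGeneratedBy n1 n2 n3 n4 α1 α2 α3 α4 β1 β2 β3 := by
  intro a b c d a' b' c' d' h
  let e (p q r s : ℕ) : Fin 4 →₀ ℕ :=
    Finsupp.single 0 p + Finsupp.single 1 q + Finsupp.single 2 r + Finsupp.single 3 s
  have hweight (p q r s : ℕ) :
      Finsupp.weight ![n1, n2, n3, n4] (e p q r s) = p * n1 + q * n2 + r * n3 + s * n4 := by
    simp [e, Finsupp.weight_single]
  have hgen : ({X 0 ^ α1 - X 1 ^ α2, X 2 ^ α3 - X 3 ^ α4, X 0 ^ β1 * X 1 ^ β2 - X 2 ^ β3} :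
      Set (MvPolynomial (Fin 4) ℚ)) = (fun p => monomial p.1 1 - monomial p.2 1) ''
        {(e α1 0 0 0, e 0 α2 0 0), (e 0 0 α3 0, e 0 0 0 α4), (e β1 β2 0 0, e 0 0 β3 0)} := by
    simp [e, Set.image_insert_eq, X_pow_eq_monomial, monomial_mul]
  have hmem : monomial (e a b c d) (1 : ℚ) - monomial (e a' b' c' d') 1 ∈
      Ideal.span ((fun p => monomial p.1 (1 : ℚ) - monomial p.2 1) ''
        {(e α1 0 0 0, e 0 α2 0 0), (e 0 0 α3 0, e 0 0 0 α4), (e β1 β2 0 0, e 0 0 β3 0)}) := by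
    rw [← hgen, ← hker, RingHom.mem_ker, map_sub]
    rw [aeval_X_pow_monomial, aeval_X_pow_monomial, hweight, hweight, h, sub_self]
  have hlat := intExponent_sub_mem_span_of_mem_span hmem
  simp only [Set.image_insert_eq, Set.image_singleton, Submodule.mem_span_insert,
    Submodule.mem_span_singleton] at hlat
  obtain ⟨x, _, ⟨y, _, ⟨z, rfl⟩, hw⟩, hv⟩ := hlat
  rw [hw] at hv
  have h0 := DFunLike.congr_fun hv 0
  have h1 := DFunLike.congr_fun hv 1
  have h2 := DFunLike.congr_fun hv 2
  have h3 := DFunLike.congr_fun hv 3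
  simp only [intExponent, Fin.isValue, Finsupp.mapRange.addMonoidHom_apply,
    Nat.coe_castAddMonoidHom, Finsupp.coe_sub, Pi.sub_apply, Finsupp.mapRange_apply, Finsupp.coe_add, Pi.add_apply,
    Finsupp.single_eq_same, ne_eq, zero_ne_one, not_false_eq_true, Finsupp.single_eq_of_ne,
    add_zero, Fin.reduceEq, Finsupp.single_zero, Finsupp.mapRange_single, zero_add,
    Finsupp.coe_smul, zsmul_eq_mul, Pi.mul_apply, Pi.intCast_apply, Int.cast_eq, sub_zero,
    sub_self, mul_zero, one_ne_zero, zero_sub, mul_neg, CharP.cast_eq_zero, e] at h0 h1 h2 h3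
  exact ⟨x, y, z, by linarith, by linarith, by linarith, by linarith⟩

theorem Nat.mul_eq_mod_mul_add_div_mul (c : ℕ) {q m s : ℕ} (h : q * m = s) :
    c * m = c % q * m + c / q * s := by
  rw [← h, ← mul_assoc, ← add_mul, Nat.mod_add_div']

theorem Int.nonpos_of_mul_lt {x m : ℤ} (hm : 0 < m) (h : x * m < m) : x ≤ 0 := by
  by_contra! hx
  nlinarith

theorem Nat.lt_of_mul_eq_mul_of_lt {p q m n : ℕ} (h : p * m = q * n) (hmn : m < n) (hq : 0 < q) :
    q < p :=
  lt_of_mul_lt_mul_right (h ▸ Nat.mul_lt_mul_of_pos_left hmn hq : q * m < p * m) m.zero_le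

section CompleteIntersection

variable {n1 n2 n3 n4 α1 α2 α3 α4 β1 β2 β3 : ℕ}

theorem exists_reduced_factorization (hα2 : 0 < α2) (hβ3 : 0 < β3) (hα4 : 0 < α4)
    (hr1 : α1 * n1 = α2 * n2) (hr2 : α3 * n3 = α4 * n4)
    (hr3 : β1 * n1 + β2 * n2 = β3 * n3) (a b c d : ℕ) :
    ∃ a' b' c' d' : ℕ, a' * n1 + b' * n2 + c' * n3 + d' * n4
      = a * n1 + b * n2 + c * n3 + d * n4 ∧ b' < α2 ∧ c' < β3 ∧ d' < α4 := by
  -- reduce `d` mod `α4` (trading `α4 n4` for `α3 n3`), then `c` mod `β3`, then `b` mod `α2`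
  set c1 := c + d / α4 * α3
  set b1 := b + c1 / β3 * β2
  have hd := Nat.mul_eq_mod_mul_add_div_mul d hr2.symm
  have hc := Nat.mul_eq_mod_mul_add_div_mul c1 hr3.symm
  have hb := Nat.mul_eq_mod_mul_add_div_mul b1 hr1.symm
  refine ⟨a + c1 / β3 * β1 + b1 / α2 * α1, b1 % α2, c1 % β3, d % α4, ?_,
    Nat.mod_lt _ hα2, Nat.mod_lt _ hβ3, Nat.mod_lt _ hα4⟩
  simp only [c1, b1] at hc hb ⊢
  linarith

theorem eq_zero_and_length_le_of_eq (hrel : RelationsGeneratedBy n1 n2 n3 n4 α1 α2 α3 α4 β1 β2 β3)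
    (hα2 : 0 < α2) (hβ3 : 0 < β3) (hα4 : 0 < α4)
    (h21 : α2 < α1) (h43 : α4 < α3) (hβ : β3 < β1 + β2) {a b c d : ℕ}
    (h : a * n1 + b * n2 + c * n3 + d * n4 = (α2 - 1) * n2 + (β3 - 1) * n3 + (α4 - 1) * n4) :
    a = 0 ∧ a + b + c + d ≤ (α2 - 1) + (β3 - 1) + (α4 - 1) := by
  obtain ⟨x, y, z, ea, eb, ec, ed⟩ := hrel a b c d 0 (α2 - 1) (β3 - 1) (α4 - 1) (by simpa using h)
  push_cast [Nat.cast_sub hα2, Nat.cast_sub hβ3, Nat.cast_sub hα4] at ea eb ec ed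
  have hy : y ≤ 0 := Int.nonpos_of_mul_lt (m := α4) (by exact_mod_cast hα4) (by linarith)
  have hz : z ≤ 0 := Int.nonpos_of_mul_lt (m := β3) (by exact_mod_cast hβ3)
    (by linarith [mul_nonpos_of_nonpos_of_nonneg hy (Nat.cast_nonneg (α := ℤ) α3)])
  have hx : x ≤ 0 := Int.nonpos_of_mul_lt (m := α2) (by exact_mod_cast hα2)
    (by linarith [mul_nonpos_of_nonpos_of_nonneg hz (Nat.cast_nonneg (α := ℤ) β2)])
  have hlen : (a + b + c + d : ℤ) - ((α2 - 1) + (β3 - 1) + (α4 - 1)) =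
      x * (α1 - α2) + y * (α3 - α4) + z * (β1 + β2 - β3) := by
    linear_combination ea + eb + ec + ed
  have h1 : x * ((α1 : ℤ) - α2) ≤ 0 := mul_nonpos_of_nonpos_of_nonneg hx (by omega)
  have h2 : y * ((α3 : ℤ) - α4) ≤ 0 := mul_nonpos_of_nonpos_of_nonneg hy (by omega)
  have h3 : z * ((β1 : ℤ) + β2 - β3) ≤ 0 := mul_nonpos_of_nonpos_of_nonneg hz (by omega)
  have h4 : x * (α1 : ℤ) ≤ 0 := mul_nonpos_of_nonpos_of_nonneg hx (by omega)
  have h5 : z * (β1 : ℤ) ≤ 0 := mul_nonpos_of_nonpos_of_nonneg hz (by omega)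
  omega

theorem mem_gen4_of_add_mul_mem (hα2 : 0 < α2) (hβ3 : 0 < β3) (hα4 : 0 < α4)
    (hr1 : α1 * n1 = α2 * n2) (hr2 : α3 * n3 = α4 * n4)
    (hr3 : β1 * n1 + β2 * n2 = β3 * n3) {m k : ℕ} (hk : m + k * n1 ∈ gen4 n1 n2 n3 n4)
    (hm : (α2 - 1) * n2 + (β3 - 1) * n3 + (α4 - 1) * n4 < m + n1) :
    m ∈ gen4 n1 n2 n3 n4 := by
  obtain ⟨a, b, c, d, h⟩ := hk
  obtain ⟨a', b', c', d', h', hb, hc, hd⟩ :=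
    exists_reduced_factorization hα2 hβ3 hα4 hr1 hr2 hr3 a b c d
  have hrest : b' * n2 + c' * n3 + d' * n4 < m + n1 :=
    calc _ ≤ (α2 - 1) * n2 + (β3 - 1) * n3 + (α4 - 1) * n4 := by gcongr <;> omega
      _ < m + n1 := hm
  have hka : k ≤ a' :=
    Nat.lt_succ_iff.mp <| lt_of_mul_lt_mul_right (a := n1) (by linarith) n1.zero_le
  have := Nat.mul_le_mul_right n1 hka
  exact ⟨a' - k, b', c', d', by rw [Nat.sub_mul]; omega⟩

end CompleteIntersection

theorem stmt_19_general (n1 n2 n3 n4 : ℕ) (h1 : 0 < n1) (h12 : n1 < n2)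
    (h23 : n2 < n3) (h34 : n3 < n4)
    (α1 α2 α3 α4 β1 β2 β3 : ℕ)
    (hα2 : 1 ≤ α2) (hα3 : 1 ≤ α3) (hα4 : 1 ≤ α4)
    (hβ1 : 1 ≤ β1) (hβ3 : α3 ≤ β3)
    (hr1 : α1 * n1 = α2 * n2) (hr2 : α3 * n3 = α4 * n4)
    (hr3 : β1 * n1 + β2 * n2 = β3 * n3)
    (f : ℕ) (hf : f ∉ gen4 n1 n2 n3 n4)
    (hfro : ∀ m : ℕ, f < m → m ∈ gen4 n1 n2 n3 n4)
    (hker : RingHom.ker (MvPolynomial.aeval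
          (fun i : Fin 4 => (Polynomial.X : Polynomial ℚ) ^ (![n1, n2, n3, n4] i)) :
        MvPolynomial (Fin 4) ℚ →ₐ[ℚ] Polynomial ℚ) =
      Ideal.span {X 0 ^ α1 - X 1 ^ α2, X 2 ^ α3 - X 3 ^ α4,
        X 0 ^ β1 * X 1 ^ β2 - X 2 ^ β3}) :
    f + n1 = (α2 - 1) * n2 + (β3 - 1) * n3 + (α4 - 1) * n4 ∧
    IsGreatest {s | ∃ a b c d : ℕ,
        a * n1 + b * n2 + c * n3 + d * n4 = f + n1 ∧ a + b + c + d = s}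
      ((α2 - 1) + (β3 - 1) + (α4 - 1)) := by
  have hβ3' : 0 < β3 := by omega
  have hrel := relationsGeneratedBy_of_ker_eq_span hker
  have h21 : α2 < α1 := Nat.lt_of_mul_eq_mul_of_lt hr1 h12 hα2
  have h43 : α4 < α3 := Nat.lt_of_mul_eq_mul_of_lt hr2 h34 hα4
  have hβ : β3 < β1 + β2 := by
    refine lt_of_mul_lt_mul_right (a := n3) ?_ n3.zero_le
    nlinarith
  have top {a b c d : ℕ} := eq_zero_and_length_le_of_eq (a := a) (b := b) (c := c) (d := d)
    hrel hα2 hβ3' hα4 h21 h43 hβ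
  have hfN : f + n1 = (α2 - 1) * n2 + (β3 - 1) * n3 + (α4 - 1) * n4 := by
    by_contra hne
    rcases Nat.lt_or_gt_of_ne hne with hlt | hgt
    · obtain ⟨a, b, c, d, h⟩ := hfro _ (Nat.lt_sub_of_add_lt hlt)
      have h' : (a + 1) * n1 + b * n2 + c * n3 + d * n4 =
          (α2 - 1) * n2 + (β3 - 1) * n3 + (α4 - 1) * n4 := by
        rw [add_mul, one_mul]; omega
      exact a.succ_ne_zero (top h').1
    · refine hf (mem_gen4_of_add_mul_mem hα2 hβ3' hα4 hr1 hr2 hr3 (k := f + 1) (hfro _ ?_) hgt)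
      nlinarith
  refine ⟨hfN, ⟨0, α2 - 1, β3 - 1, α4 - 1, by rw [hfN]; ring, by omega⟩, ?_⟩
  rintro s ⟨a, b, c, d, h, rfl⟩
  exact (top (h.trans hfN)).2

theorem stmt_19 (n1 n2 n3 n4 : ℕ) (h1 : 0 < n1) (h12 : n1 < n2)
    (h23 : n2 < n3) (h34 : n3 < n4)
    (hgcd : Nat.gcd (Nat.gcd (Nat.gcd n1 n2) n3) n4 = 1)
    (hmin1 : ¬ ∃ b c d : ℕ, b * n2 + c * n3 + d * n4 = n1)
    (hmin2 : ¬ ∃ a c d : ℕ, a * n1 + c * n3 + d * n4 = n2)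
    (hmin3 : ¬ ∃ a b d : ℕ, a * n1 + b * n2 + d * n4 = n3)
    (hmin4 : ¬ ∃ a b c : ℕ, a * n1 + b * n2 + c * n3 = n4)
    (α1 α2 α3 α4 β1 β2 β3 : ℕ)
    (hα1 : 1 ≤ α1) (hα2 : 1 ≤ α2) (hα3 : 1 ≤ α3) (hα4 : 1 ≤ α4)
    (hβ1 : 1 ≤ β1) (hβ3 : α3 ≤ β3) (hβ2 : β2 < α2)
    (hr1 : α1 * n1 = α2 * n2) (hr2 : α3 * n3 = α4 * n4)
    (hr3 : β1 * n1 + β2 * n2 = β3 * n3)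
    (f : ℕ) (hf : f ∉ gen4 n1 n2 n3 n4)
    (hfro : ∀ m : ℕ, f < m → m ∈ gen4 n1 n2 n3 n4)
    (hker : RingHom.ker (MvPolynomial.aeval
          (fun i : Fin 4 => (Polynomial.X : Polynomial ℚ) ^ (![n1, n2, n3, n4] i)) :
        MvPolynomial (Fin 4) ℚ →ₐ[ℚ] Polynomial ℚ) =
      Ideal.span {X 0 ^ α1 - X 1 ^ α2, X 2 ^ α3 - X 3 ^ α4,
        X 0 ^ β1 * X 1 ^ β2 - X 2 ^ β3}) :
    f + n1 = (α2 - 1) * n2 + (β3 - 1) * n3 + (α4 - 1) * n4 ∧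
    IsGreatest {s | ∃ a b c d : ℕ,
        a * n1 + b * n2 + c * n3 + d * n4 = f + n1 ∧ a + b + c + d = s}
      ((α2 - 1) + (β3 - 1) + (α4 - 1)) :=
  stmt_19_general n1 n2 n3 n4 h1 h12 h23 h34 α1 α2 α3 α4 β1 β2 β3 hα2 hα3 hα4 hβ1 hβ3 hr1 hr2 hr3 f
    hf hfro hker
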